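/- For every integer n ≥ 1, the number of Catalan words of length n avoiding the vincular pattern 1-12 equals 2^{n−1}, the number avoiding 1-21 equals 2^{n−1}, and the number avoiding 1-23 equals 2^{n−1}. -/

import Mathlib

/-- A Catalan word: a word of positive integers starting with 1 in which each
letter exceeds its predecessor by at most 1. -/
def IsCatalanWord {n : ℕ} (w : Fin n → ℕ) : Prop :=
  (∀ i, 1 ≤ w i) ∧ (∀ h : 0 < n, w ⟨0, h⟩ = 1) ∧
  ∀ i : ℕ, ∀ h : i + 1 < n, w ⟨i + 1, h⟩ ≤ w ⟨i, by omega⟩ + 1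

/-- `w` contains the vincular pattern 1-12: there are indices `i < j` with
`w i = w j < w (j+1)`. -/
def Contains1_12 {n : ℕ} (w : Fin n → ℕ) : Prop :=
  ∃ i j : ℕ, ∃ hj : j + 1 < n, ∃ hij : i < j,
    w ⟨i, by omega⟩ = w ⟨j, by omega⟩ ∧ w ⟨j, by omega⟩ < w ⟨j + 1, hj⟩

/-- `w` contains the vincular pattern 1-21: there are indices `i < j` with
`w i = w (j+1) < w j`. -/
def Contains1_21 {n : ℕ} (w : Fin n → ℕ) : Prop :=
  ∃ i j : ℕ, ∃ hj : j + 1 < n, ∃ hij : i < j,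
    w ⟨i, by omega⟩ = w ⟨j + 1, hj⟩ ∧ w ⟨j + 1, hj⟩ < w ⟨j, by omega⟩

/-- `w` contains the vincular pattern 1-23: there are indices `i < j` with
`w i < w j < w (j+1)`. -/
def Contains1_23 {n : ℕ} (w : Fin n → ℕ) : Prop :=
  ∃ i j : ℕ, ∃ hj : j + 1 < n, ∃ hij : i < j,
    w ⟨i, by omega⟩ < w ⟨j, by omega⟩ ∧ w ⟨j, by omega⟩ < w ⟨j + 1, hj⟩

/-!
Each of the three counts doubles from length `n + 1` to length `n + 2`: every avoider of
length `n + 2` arises in exactly one way from an avoider of length `n + 1` by one of two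
operations, namely appending `1` or lifting `u ↦ 1 (u + 1)` for 1-12, prepending `1` to `u` or
to `u + 1` for 1-21, and appending `1` or `2` for 1-23. The case split is on the last letter
for 1-12 and on the second letter for 1-21, because in a 1-12 avoider a `1` after the first
position is followed by `1`s only, and in a 1-21 avoider a letter `≥ 2` after the first
position is followed by letters `≥ 2` only; a 1-23 avoider has no letter above `2`.
-/

open Set Function

variable {n : ℕ}

theorem Set.ncard_eq_two_mul_of_injOn {α β : Type*} {S : Set α} {T : Set β} {f g : α → β}
    (hf : InjOn f S) (hg : InjOn g S) (hfg : ∀ x ∈ S, ∀ y ∈ S, f x ≠ g y)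
    (hfT : MapsTo f S T) (hgT : MapsTo g S T) (hT : ∀ z ∈ T, z ∈ f '' S ∨ z ∈ g '' S) :
    T.ncard = 2 * S.ncard := by
  have hunion : f '' S ∪ g '' S = T :=
    (union_subset hfT.image_subset hgT.image_subset).antisymm fun z hz => hT z hz
  subst hunion
  rcases S.finite_or_infinite with hS | hS
  · have hdisj : Disjoint (f '' S) (g '' S) := by
      rw [Set.disjoint_left]
      rintro _ ⟨x, hx, rfl⟩ ⟨y, hy, hxy⟩
      exact hfg x hx y hy hxy.symm
    rw [ncard_union_eq hdisj (hS.image f) (hS.image g), hf.ncard_image, hg.ncard_image]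
    ring
  · rw [hS.ncard, ((infinite_image_iff hf).2 hS).mono subset_union_left |>.ncard]

def catalanAvoiders (P : ∀ m, (Fin m → ℕ) → Prop) (m : ℕ) : Set (Fin m → ℕ) :=
  {w | IsCatalanWord w ∧ ¬ P m w}

theorem ncard_catalanAvoiders_one (P : ∀ m, (Fin m → ℕ) → Prop) (hP : ∀ w, ¬ P 1 w) :
    (catalanAvoiders P 1).ncard = 1 := by
  rw [ncard_eq_one]
  refine ⟨fun _ => 1, Set.ext fun w => ⟨fun hw => funext fun i => ?_, ?_⟩⟩
  · rw [Subsingleton.elim i ⟨0, zero_lt_one⟩]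
    exact hw.1.2.1 zero_lt_one
  · rintro rfl
    exact ⟨⟨fun _ => le_rfl, fun _ => rfl, fun i hi => absurd hi (by omega)⟩, hP _⟩

theorem ncard_catalanAvoiders_eq_two_pow (P : ∀ m, (Fin m → ℕ) → Prop) (hP : ∀ w, ¬ P 1 w)
    (hstep : ∀ m, (catalanAvoiders P (m + 2)).ncard = 2 * (catalanAvoiders P (m + 1)).ncard)
    (hn : 1 ≤ n) : (catalanAvoiders P n).ncard = 2 ^ (n - 1) := by
  induction n, hn using Nat.le_induction with
  | base => exact ncard_catalanAvoiders_one P hP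
  | succ m hm ih =>
    obtain ⟨k, rfl⟩ : ∃ k, m = k + 1 := ⟨m - 1, by omega⟩
    rw [hstep, ih]
    simp [pow_succ, mul_comm]

@[simp]
theorem cons_apply_mk_succ (x : ℕ) (u : Fin n → ℕ) {i : ℕ} (h : i + 1 < n + 1) :
    (Fin.cons x u : Fin (n + 1) → ℕ) ⟨i + 1, h⟩ = u ⟨i, by omega⟩ := rfl

theorem snoc_apply_mk_of_lt (u : Fin n → ℕ) (x : ℕ) {i : ℕ} (h : i < n + 1) (hi : i < n) :
    (Fin.snoc u x : Fin (n + 1) → ℕ) ⟨i, h⟩ = u ⟨i, hi⟩ :=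
  Fin.snoc_castSucc (α := fun _ => ℕ) x u ⟨i, hi⟩

@[simp]
theorem snoc_apply_mk_self (u : Fin n → ℕ) (x : ℕ) (h : n < n + 1) :
    (Fin.snoc u x : Fin (n + 1) → ℕ) ⟨n, h⟩ = x :=
  Fin.snoc_last (α := fun _ => ℕ) x u

section Occurrences

def OccursVincular (R : ℕ → ℕ → ℕ → Prop) (w : Fin n → ℕ) : Prop :=
  ∃ i j : ℕ, ∃ hj : j + 1 < n, ∃ _ : i < j, R (w ⟨i, by omega⟩) (w ⟨j, by omega⟩) (w ⟨j + 1, hj⟩)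

variable {R : ℕ → ℕ → ℕ → Prop}

theorem contains1_12_iff {w : Fin n → ℕ} :
    Contains1_12 w ↔ OccursVincular (fun a b c => a = b ∧ b < c) w := Iff.rfl

theorem contains1_21_iff {w : Fin n → ℕ} :
    Contains1_21 w ↔ OccursVincular (fun a b c => a = c ∧ c < b) w := Iff.rfl

theorem contains1_23_iff {w : Fin n → ℕ} :
    Contains1_23 w ↔ OccursVincular (fun a b c => a < b ∧ b < c) w := Iff.rfl

theorem occursVincular_cons {x : ℕ} {u : Fin n → ℕ} :
    OccursVincular R (Fin.cons x u : Fin (n + 1) → ℕ) ↔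
      OccursVincular R u ∨ ∃ j : ℕ, ∃ hj : j + 1 < n, R x (u ⟨j, by omega⟩) (u ⟨j + 1, hj⟩) := by
  constructor
  · rintro ⟨i, j, hj, hij, hR⟩
    obtain ⟨j, rfl⟩ : ∃ k, j = k + 1 := ⟨j - 1, by omega⟩
    rcases i with _ | i
    · exact .inr ⟨j, by omega, hR⟩
    · exact .inl ⟨i, j, by omega, by omega, hR⟩
  · rintro (⟨i, j, hj, hij, hR⟩ | ⟨j, hj, hR⟩)
    · exact ⟨i + 1, j + 1, by omega, by omega, hR⟩
    · exact ⟨0, j + 1, by omega, by omega, by simpa using hR⟩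

theorem occursVincular_snoc {x : ℕ} {u : Fin (n + 1) → ℕ} :
    OccursVincular R (Fin.snoc u x : Fin (n + 1 + 1) → ℕ) ↔
      OccursVincular R u ∨ ∃ i : ℕ, ∃ _ : i < n, R (u ⟨i, by omega⟩) (u ⟨n, by omega⟩) x := by
  constructor
  · rintro ⟨i, j, hj, hij, hR⟩
    rw [snoc_apply_mk_of_lt u x _ (by omega), snoc_apply_mk_of_lt u x _ (by omega)] at hR
    rcases Nat.lt_or_ge (j + 1) (n + 1) with hjn | hjn
    · rw [snoc_apply_mk_of_lt u x _ hjn] at hR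
      exact .inl ⟨i, j, hjn, hij, hR⟩
    · obtain rfl : j = n := by omega
      rw [snoc_apply_mk_self] at hR
      exact .inr ⟨i, hij, hR⟩
  · rintro (⟨i, j, hj, hij, hR⟩ | ⟨i, hi, hR⟩)
    · refine ⟨i, j, by omega, hij, ?_⟩
      rwa [snoc_apply_mk_of_lt u x _ (by omega), snoc_apply_mk_of_lt u x _ (by omega),
        snoc_apply_mk_of_lt u x _ (by omega)]
    · refine ⟨i, n, by omega, hi, ?_⟩
      rwa [snoc_apply_mk_of_lt u x _ (by omega), snoc_apply_mk_of_lt u x _ (by omega),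
        snoc_apply_mk_self]

theorem occursVincular_add_one (hR : ∀ a b c, R (a + 1) (b + 1) (c + 1) ↔ R a b c)
    {u : Fin n → ℕ} : OccursVincular R (u + 1) ↔ OccursVincular R u := by
  simp only [OccursVincular, Pi.add_apply, Pi.one_apply, hR]

end Occurrences

theorem isCatalanWord_snoc {u : Fin (n + 1) → ℕ} {x : ℕ} :
    IsCatalanWord (Fin.snoc u x : Fin (n + 1 + 1) → ℕ) ↔
      IsCatalanWord u ∧ 1 ≤ x ∧ x ≤ u ⟨n, by omega⟩ + 1 := by
  constructor
  · rintro ⟨hpos, hfirst, hstep⟩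
    refine ⟨⟨fun i => by simpa using hpos i.castSucc, fun h => ?_, fun i hi => ?_⟩,
      by simpa using hpos (Fin.last _), ?_⟩
    · have := hfirst (by omega)
      simpa (disch := omega) only [snoc_apply_mk_of_lt] using this
    · have := hstep i (by omega)
      simpa (disch := omega) only [snoc_apply_mk_of_lt] using this
    · have := hstep n (by omega)
      simpa (disch := omega) only [snoc_apply_mk_of_lt, snoc_apply_mk_self] using this
  · rintro ⟨⟨hpos, hfirst, hstep⟩, hx, hxu⟩
    refine ⟨Fin.lastCases (by simpa using hx) (fun i => by simpa using hpos i), fun h => ?_,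
      fun i hi => ?_⟩
    · simpa (disch := omega) only [snoc_apply_mk_of_lt] using hfirst (Nat.succ_pos n)
    · rcases Nat.lt_or_ge (i + 1) (n + 1) with hin | hin
      · simpa (disch := omega) only [snoc_apply_mk_of_lt] using hstep i hin
      · obtain rfl : i = n := by omega
        simpa (disch := omega) only [snoc_apply_mk_of_lt, snoc_apply_mk_self] using hxu

theorem IsCatalanWord.cons_one {u : Fin n → ℕ} (hu : IsCatalanWord u) :
    IsCatalanWord (Fin.cons 1 u : Fin (n + 1) → ℕ) := by
  refine ⟨Fin.cases le_rfl hu.1, fun _ => rfl, fun i hi => ?_⟩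
  rcases i with _ | i
  · simp [hu.2.1 (by omega)]
  · exact hu.2.2 i (by omega)

theorem IsCatalanWord.cons_one_add_one {u : Fin n → ℕ} (hu : IsCatalanWord u) :
    IsCatalanWord (Fin.cons 1 (u + 1) : Fin (n + 1) → ℕ) := by
  refine ⟨Fin.cases le_rfl fun i => by simp, fun _ => rfl, fun i hi => ?_⟩
  rcases i with _ | i
  · simp [hu.2.1 (by omega)]
  · exact Nat.add_le_add_right (hu.2.2 i (by omega)) 1

theorem IsCatalanWord.of_cons_one {u : Fin (n + 1) → ℕ}
    (hw : IsCatalanWord (Fin.cons 1 u : Fin (n + 1 + 1) → ℕ)) (h0 : u 0 = 1) : IsCatalanWord u :=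
  ⟨fun i => hw.1 i.succ, fun _ => h0, fun i hi => hw.2.2 (i + 1) (by omega)⟩

theorem IsCatalanWord.of_cons_one_add_one {u : Fin n → ℕ}
    (hw : IsCatalanWord (Fin.cons 1 (u + 1) : Fin (n + 1) → ℕ)) (hu : ∀ i, 1 ≤ u i) :
    IsCatalanWord u := by
  refine ⟨hu, fun h => ?_, fun i hi => Nat.le_of_add_le_add_right (hw.2.2 (i + 1) (by omega))⟩
  have h01 : 0 + 1 < n + 1 := by omega
  have h1 : u ⟨0, h⟩ + 1 ≤ 1 + 1 := hw.2.2 0 h01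
  have h2 := hu ⟨0, h⟩
  omega

theorem IsCatalanWord.exists_eq_cons_one_add_one {w : Fin (n + 1) → ℕ} (hw : IsCatalanWord w)
    (h : ∀ i : Fin n, 2 ≤ w i.succ) : ∃ u, IsCatalanWord u ∧ w = Fin.cons 1 (u + 1) := by
  set u : Fin n → ℕ := fun i => w i.succ - 1
  have hwu : w = Fin.cons 1 (u + 1) := by
    ext i
    cases i using Fin.cases with
    | zero => exact hw.2.1 _
    | succ i => simp only [Fin.cons_succ, Pi.add_apply, Pi.one_apply, u]; have := h i; omega
  refine ⟨u, (hwu ▸ hw).of_cons_one_add_one fun i => ?_, hwu⟩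
  have := h i
  simp only [u]
  omega

section Pattern1_12

theorem IsCatalanWord.eq_one_of_not_contains1_12 {w : Fin n → ℕ} (hw : IsCatalanWord w)
    (hav : ¬ Contains1_12 w) {j k : ℕ} (hj : 1 ≤ j) (hjk : j ≤ k) (hk : k < n)
    (h : w ⟨j, by omega⟩ = 1) : w ⟨k, hk⟩ = 1 := by
  induction k, hjk using Nat.le_induction with
  | base => exact h
  | succ k hjk ih =>
    have hk1 : w ⟨k, by omega⟩ = 1 := ih (by omega) h
    have hpos := hw.1 ⟨k + 1, hk⟩
    by_contra hne
    exact hav ⟨0, k, hk, by omega, by rw [hw.2.1, hk1], by omega⟩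

theorem IsCatalanWord.two_le_succ_of_not_contains1_12 {w : Fin (n + 1) → ℕ}
    (hw : IsCatalanWord w) (hav : ¬ Contains1_12 w) (hlast : w (Fin.last n) ≠ 1) (i : Fin n) :
    2 ≤ w i.succ := by
  by_contra hi
  have h1 : w i.succ = 1 := le_antisymm (by omega) (hw.1 _)
  exact hlast (hw.eq_one_of_not_contains1_12 hav (j := i + 1) (by omega) (by omega) _ h1)

theorem snoc_one_mem_catalanAvoiders_contains1_12 {u : Fin (n + 1) → ℕ}
    (hu : u ∈ catalanAvoiders @Contains1_12 (n + 1)) :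
    (Fin.snoc u 1 : Fin (n + 1 + 1) → ℕ) ∈ catalanAvoiders @Contains1_12 (n + 2) := by
  obtain ⟨hu, hav⟩ := hu
  refine ⟨isCatalanWord_snoc.2 ⟨hu, le_rfl, by omega⟩, ?_⟩
  rw [contains1_12_iff, occursVincular_snoc]
  rintro (h | ⟨i, hi, -, h⟩)
  · exact hav h
  · have := hu.1 ⟨n, by omega⟩
    omega

theorem cons_one_add_one_mem_catalanAvoiders_contains1_12 {u : Fin n → ℕ}
    (hu : u ∈ catalanAvoiders @Contains1_12 n) :
    (Fin.cons 1 (u + 1) : Fin (n + 1) → ℕ) ∈ catalanAvoiders @Contains1_12 (n + 1) := by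
  obtain ⟨hu, hav⟩ := hu
  refine ⟨hu.cons_one_add_one, ?_⟩
  rw [contains1_12_iff, occursVincular_cons, occursVincular_add_one (by simp)]
  rintro (h | ⟨j, hj, h, -⟩)
  · exact hav h
  · have := hu.1 ⟨j, by omega⟩
    simp only [Pi.add_apply, Pi.one_apply] at h
    omega

theorem mem_catalanAvoiders_contains1_12_succ_succ {w : Fin (n + 2) → ℕ}
    (hw : w ∈ catalanAvoiders @Contains1_12 (n + 2)) :
    (∃ u ∈ catalanAvoiders @Contains1_12 (n + 1), Fin.snoc u 1 = w) ∨
      ∃ u ∈ catalanAvoiders @Contains1_12 (n + 1), Fin.cons 1 (u + 1) = w := by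
  obtain ⟨hw, hav⟩ := hw
  by_cases hlast : w (Fin.last _) = 1
  · left
    obtain ⟨u, x, rfl⟩ : ∃ u x, w = Fin.snoc u x := ⟨_, _, (Fin.snoc_init_self w).symm⟩
    obtain rfl : x = 1 := by simpa using hlast
    refine ⟨u, ⟨(isCatalanWord_snoc.1 hw).1, fun h => hav ?_⟩, rfl⟩
    rw [contains1_12_iff, occursVincular_snoc]
    exact .inl h
  · right
    obtain ⟨u, hu, rfl⟩ :=
      hw.exists_eq_cons_one_add_one (hw.two_le_succ_of_not_contains1_12 hav hlast)
    refine ⟨u, ⟨hu, fun h => hav ?_⟩, rfl⟩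
    rw [contains1_12_iff, occursVincular_cons, occursVincular_add_one (by simp)]
    exact .inl h

theorem ncard_catalanAvoiders_contains1_12_succ_succ (m : ℕ) :
    (catalanAvoiders @Contains1_12 (m + 2)).ncard =
      2 * (catalanAvoiders @Contains1_12 (m + 1)).ncard := by
  refine Set.ncard_eq_two_mul_of_injOn (Fin.snoc_left_injective (α := fun _ => ℕ) 1).injOn
    ((Fin.cons_right_injective (α := fun _ => ℕ) 1).comp (add_left_injective 1)).injOn
    (fun _ _ v hv h => ?_) (fun _ => snoc_one_mem_catalanAvoiders_contains1_12)
    (fun _ => cons_one_add_one_mem_catalanAvoiders_contains1_12)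
    (fun _ => mem_catalanAvoiders_contains1_12_succ_succ)
  have hlast := congrFun h (Fin.last _)
  simp only [Fin.snoc_last, comp_apply, Fin.cons_last, Pi.add_apply, Pi.one_apply] at hlast
  have := hv.1.1 (Fin.last m)
  omega

end Pattern1_12

section Pattern1_21

theorem IsCatalanWord.two_le_of_not_contains1_21 {w : Fin n → ℕ} (hw : IsCatalanWord w)
    (hav : ¬ Contains1_21 w) {j k : ℕ} (hj : 1 ≤ j) (hjk : j ≤ k) (hk : k < n)
    (h : 2 ≤ w ⟨j, by omega⟩) : 2 ≤ w ⟨k, hk⟩ := by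
  induction k, hjk using Nat.le_induction with
  | base => exact h
  | succ k hjk ih =>
    have hk2 : 2 ≤ w ⟨k, by omega⟩ := ih (by omega) h
    have hpos := hw.1 ⟨k + 1, hk⟩
    by_contra hlt
    exact hav ⟨0, k, hk, by omega, by rw [hw.2.1]; omega, by omega⟩

theorem cons_one_mem_catalanAvoiders_contains1_21 {u : Fin (n + 1) → ℕ}
    (hu : u ∈ catalanAvoiders @Contains1_21 (n + 1)) :
    (Fin.cons 1 u : Fin (n + 2) → ℕ) ∈ catalanAvoiders @Contains1_21 (n + 2) := by
  obtain ⟨hu, hav⟩ := hu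
  refine ⟨hu.cons_one, ?_⟩
  rw [contains1_21_iff, occursVincular_cons]
  rintro (h | ⟨j, hj, h1, h2⟩)
  · exact hav h
  · rcases j with _ | j
    · have := hu.2.1 (by omega)
      omega
    · exact hav ⟨0, j + 1, hj, by omega, by rw [hu.2.1]; exact h1, h2⟩

theorem cons_one_add_one_mem_catalanAvoiders_contains1_21 {u : Fin n → ℕ}
    (hu : u ∈ catalanAvoiders @Contains1_21 n) :
    (Fin.cons 1 (u + 1) : Fin (n + 1) → ℕ) ∈ catalanAvoiders @Contains1_21 (n + 1) := by
  obtain ⟨hu, hav⟩ := hu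
  refine ⟨hu.cons_one_add_one, ?_⟩
  rw [contains1_21_iff, occursVincular_cons, occursVincular_add_one (by simp)]
  rintro (h | ⟨j, hj, h, -⟩)
  · exact hav h
  · have := hu.1 ⟨j + 1, hj⟩
    simp only [Pi.add_apply, Pi.one_apply] at h
    omega

theorem mem_catalanAvoiders_contains1_21_succ_succ {w : Fin (n + 2) → ℕ}
    (hw : w ∈ catalanAvoiders @Contains1_21 (n + 2)) :
    (∃ u ∈ catalanAvoiders @Contains1_21 (n + 1), Fin.cons 1 u = w) ∨
      ∃ u ∈ catalanAvoiders @Contains1_21 (n + 1), Fin.cons 1 (u + 1) = w := by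
  obtain ⟨hw, hav⟩ := hw
  by_cases h1 : w ⟨1, by omega⟩ = 1
  · left
    obtain ⟨x, u, rfl⟩ : ∃ x u, w = Fin.cons x u := ⟨_, _, (Fin.cons_self_tail w).symm⟩
    obtain rfl : x = 1 := hw.2.1 (Nat.succ_pos _)
    refine ⟨u, ⟨hw.of_cons_one h1, fun h => hav ?_⟩, rfl⟩
    rw [contains1_21_iff, occursVincular_cons]
    exact .inl h
  · right
    have hw1 : 2 ≤ w ⟨1, by omega⟩ := by have := hw.1 ⟨1, by omega⟩; omega
    obtain ⟨u, hu, rfl⟩ := hw.exists_eq_cons_one_add_one fun i =>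
      hw.two_le_of_not_contains1_21 hav le_rfl (by simp) _ hw1
    refine ⟨u, ⟨hu, fun h => hav ?_⟩, rfl⟩
    rw [contains1_21_iff, occursVincular_cons, occursVincular_add_one (by simp)]
    exact .inl h

theorem ncard_catalanAvoiders_contains1_21_succ_succ (m : ℕ) :
    (catalanAvoiders @Contains1_21 (m + 2)).ncard =
      2 * (catalanAvoiders @Contains1_21 (m + 1)).ncard := by
  refine Set.ncard_eq_two_mul_of_injOn (Fin.cons_right_injective (α := fun _ => ℕ) 1).injOn
    ((Fin.cons_right_injective (α := fun _ => ℕ) 1).comp (add_left_injective 1)).injOn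
    (fun u hu v hv h => ?_) (fun _ => cons_one_mem_catalanAvoiders_contains1_21)
    (fun _ => cons_one_add_one_mem_catalanAvoiders_contains1_21)
    (fun _ => mem_catalanAvoiders_contains1_21_succ_succ)
  have h0 := congrFun (Fin.cons_right_injective _ h) 0
  have hu0 : u 0 = 1 := hu.1.2.1 (Nat.succ_pos m)
  have hv0 : v 0 = 1 := hv.1.2.1 (Nat.succ_pos m)
  simp only [Pi.add_apply, Pi.one_apply] at h0
  omega

end Pattern1_21

section Pattern1_23

theorem IsCatalanWord.le_two_of_not_contains1_23 {w : Fin n → ℕ} (hw : IsCatalanWord w)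
    (hav : ¬ Contains1_23 w) (i : Fin n) : w i ≤ 2 := by
  obtain ⟨k, hk⟩ := i
  induction k with
  | zero => rw [hw.2.1]; omega
  | succ k ih =>
    have hk2 := ih (by omega)
    have hstep := hw.2.2 k hk
    have h0 := hw.2.1 (by omega : 0 < n)
    by_contra h3
    rcases k with _ | k
    · omega
    · exact hav ⟨0, k + 1, hk, by omega, by omega, by omega⟩

theorem snoc_mem_catalanAvoiders_contains1_23 {u : Fin (n + 1) → ℕ} {x : ℕ}
    (hu : u ∈ catalanAvoiders @Contains1_23 (n + 1)) (hx1 : 1 ≤ x) (hx2 : x ≤ 2) :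
    (Fin.snoc u x : Fin (n + 1 + 1) → ℕ) ∈ catalanAvoiders @Contains1_23 (n + 2) := by
  obtain ⟨hu, hav⟩ := hu
  refine ⟨isCatalanWord_snoc.2 ⟨hu, hx1, by have := hu.1 ⟨n, by omega⟩; omega⟩, ?_⟩
  rw [contains1_23_iff, occursVincular_snoc]
  rintro (h | ⟨i, hi, h⟩)
  · exact hav h
  · have := hu.1 ⟨i, by omega⟩
    omega

theorem mem_catalanAvoiders_contains1_23_succ_succ {w : Fin (n + 2) → ℕ}
    (hw : w ∈ catalanAvoiders @Contains1_23 (n + 2)) :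
    (∃ u ∈ catalanAvoiders @Contains1_23 (n + 1), Fin.snoc u 1 = w) ∨
      ∃ u ∈ catalanAvoiders @Contains1_23 (n + 1), Fin.snoc u 2 = w := by
  obtain ⟨hw, hav⟩ := hw
  have hx2 := hw.le_two_of_not_contains1_23 hav (Fin.last _)
  obtain ⟨u, x, rfl⟩ : ∃ u x, w = Fin.snoc u x := ⟨_, _, (Fin.snoc_init_self w).symm⟩
  obtain ⟨hu, hx1, -⟩ := isCatalanWord_snoc.1 hw
  have hu' : u ∈ catalanAvoiders @Contains1_23 (n + 1) := ⟨hu, fun h => hav <| by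
    rw [contains1_23_iff, occursVincular_snoc]
    exact .inl h⟩
  simp only [Fin.snoc_last] at hx2
  obtain rfl | rfl : x = 1 ∨ x = 2 := by omega
  exacts [.inl ⟨u, hu', rfl⟩, .inr ⟨u, hu', rfl⟩]

theorem ncard_catalanAvoiders_contains1_23_succ_succ (m : ℕ) :
    (catalanAvoiders @Contains1_23 (m + 2)).ncard =
      2 * (catalanAvoiders @Contains1_23 (m + 1)).ncard :=
  Set.ncard_eq_two_mul_of_injOn (Fin.snoc_left_injective (α := fun _ => ℕ) 1).injOn
    (Fin.snoc_left_injective (α := fun _ => ℕ) 2).injOn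
    (fun _ _ _ _ h => by simpa using congrFun h (Fin.last _))
    (fun _ hu => snoc_mem_catalanAvoiders_contains1_23 hu le_rfl one_le_two)
    (fun _ hu => snoc_mem_catalanAvoiders_contains1_23 hu one_le_two le_rfl)
    (fun _ => mem_catalanAvoiders_contains1_23_succ_succ)

end Pattern1_23

theorem catalan_avoid_1_12_1_21_1_23 (n : ℕ) (hn : 1 ≤ n) :
    Set.ncard {w : Fin n → ℕ | IsCatalanWord w ∧ ¬ Contains1_12 w} = 2 ^ (n - 1) ∧
    Set.ncard {w : Fin n → ℕ | IsCatalanWord w ∧ ¬ Contains1_21 w} = 2 ^ (n - 1) ∧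
    Set.ncard {w : Fin n → ℕ | IsCatalanWord w ∧ ¬ Contains1_23 w} = 2 ^ (n - 1) :=
  ⟨ncard_catalanAvoiders_eq_two_pow _ (fun _ ⟨_, _, hj, hij, _⟩ => by omega)
    ncard_catalanAvoiders_contains1_12_succ_succ hn,
  ncard_catalanAvoiders_eq_two_pow _ (fun _ ⟨_, _, hj, hij, _⟩ => by omega)
    ncard_catalanAvoiders_contains1_21_succ_succ hn,
  ncard_catalanAvoiders_eq_two_pow _ (fun _ ⟨_, _, hj, hij, _⟩ => by omega)
    ncard_catalanAvoiders_contains1_23_succ_succ hn⟩
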